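/- For λ > 0 real, let η_λ(a) = (1/sinh(λ/2))·!![cosh(λ/2), −1; −1, cosh(λ/2)] and η_λ(b) = !![e^{λ/2}, 0; 0, e^{−λ/2}]. Then tr(η_λ(a)·η_λ(b)·η_λ(a)⁻¹·η_λ(b)⁻¹) = −2. -/

import Mathlib

/-!
For `A ∈ SL(2)` and `D = diag(x, x⁻¹)` a direct computation gives
`tr (A D A⁻¹ D⁻¹) = 2 - A₀₁ A₁₀ (x - x⁻¹)²`. For `η_λ(a)` the off-diagonal product is
`sinh(λ/2)⁻²`, and for `η_λ(b)` we have `x - x⁻¹ = 2 sinh(λ/2)`, so the trace is `2 - 4 = -2`.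
-/

open Real Matrix

theorem Matrix.trace_commutator_diagonal_fin_two {K : Type*} [Field K]
    (A : Matrix (Fin 2) (Fin 2) K) (hA : A.det = 1) {x : K} (hx : x ≠ 0) :
    trace (A * !![x, 0; 0, x⁻¹] * A⁻¹ * !![x, 0; 0, x⁻¹]⁻¹) =
      2 - A 0 1 * A 1 0 * (x - x⁻¹) ^ 2 := by
  have hD : (!![x, 0; 0, x⁻¹] : Matrix (Fin 2) (Fin 2) K).det = 1 := by
    simp [det_fin_two_of, hx]
  rw [inv_def, inv_def, hA, hD, adjugate_fin_two, adjugate_fin_two_of]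
  rw [det_fin_two] at hA
  simp only [Ring.inverse_one, one_smul, neg_zero, trace_fin_two, mul_apply, of_apply, cons_val',
    cons_val_fin_one, Fin.sum_univ_two, cons_val_zero, cons_val_one, mul_zero, add_zero, zero_add,
    mul_neg]
  field_simp
  linear_combination (2 * x ^ 2) * hA

theorem det_inv_sinh_smul_cosh_fin_two {y : ℝ} (hy : y ≠ 0) :
    ((sinh y)⁻¹ • !![cosh y, -1; -1, cosh y]).det = 1 := by
  have hs : sinh y ≠ 0 := sinh_ne_zero.mpr hy
  rw [det_smul, det_fin_two_of, Fintype.card_fin]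
  field_simp
  linear_combination cosh_sq_sub_sinh_sq y

theorem fuchsian_trace_commutator (l : ℝ) (hl : 0 < l) :
    Matrix.trace
      (((Real.sinh (l / 2))⁻¹ • !![Real.cosh (l / 2), -1; -1, Real.cosh (l / 2)]) *
        !![Real.exp (l / 2), 0; 0, Real.exp (-(l / 2))] *
        ((Real.sinh (l / 2))⁻¹ • !![Real.cosh (l / 2), -1; -1, Real.cosh (l / 2)])⁻¹ *
        (!![Real.exp (l / 2), 0; 0, Real.exp (-(l / 2))])⁻¹) = -2 := by
  have hy : l / 2 ≠ 0 := by positivity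
  have hs : sinh (l / 2) ≠ 0 := sinh_ne_zero.mpr hy
  have hexp : exp (l / 2) - (exp (l / 2))⁻¹ = 2 * sinh (l / 2) := by
    rw [sinh_eq, exp_neg]; ring
  rw [exp_neg, trace_commutator_diagonal_fin_two _ (det_inv_sinh_smul_cosh_fin_two hy)
    (exp_ne_zero _), hexp]
  simp only [Matrix.smul_apply, of_apply, cons_val_zero, cons_val_one, smul_eq_mul]
  field_simp
  norm_num
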